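/- Let N > 1, and let a₊, a₋, b₊, b₋, φ₁₊, φ₂₊ be as in the class S_{λ,N}: a₊ ∈ H∞⁺, a₋ ∈ H∞⁻, b₊ = e_{β/(N-1)} a₋ ∈ H∞⁺, b₋ = e_{-ν/(N-1)} a₊ ∈ H∞⁻, ν + β = λ/N, φ₁₊ = e_{λ-ν} ∑_{j=0}^{N-1} (-1)^j a₊^{N-1-j} a₋^j e_{-jλ/N}, φ₂₊ = -a₊^N. Then for any horizontal strip S = {ξ ∈ ℂ : -ε₂ < Im ξ < ε₁} (ε₁, ε₂ ≥ 0), one has inf_S (|φ₁₊| + |φ₂₊|) > 0 if and only if inf_S (|a₊| + |a₋|) > 0. -/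

import Mathlib

noncomputable section
open Complex MeasureTheory Filter Topology
open scoped ENNReal

/-- Bounded analytic functions on the upper half-plane. -/
def HInfPlus (f : ℂ → ℂ) : Prop :=
  DifferentiableOn ℂ f {z : ℂ | 0 < z.im} ∧
    ∃ C : ℝ, ∀ z : ℂ, 0 < z.im → ‖f z‖ ≤ C

/-- Bounded analytic functions on the lower half-plane. -/
def HInfMinus (f : ℂ → ℂ) : Prop :=
  DifferentiableOn ℂ f {z : ℂ | z.im < 0} ∧
    ∃ C : ℝ, ∀ z : ℂ, z.im < 0 → ‖f z‖ ≤ C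

/-- Hardy class `H_p` of the upper half-plane. -/
def HardyPlus (p : ℝ≥0∞) (f : ℂ → ℂ) : Prop :=
  DifferentiableOn ℂ f {z : ℂ | 0 < z.im} ∧
    ∃ C : ℝ≥0∞, ∀ y : ℝ, 0 < y →
      eLpNorm (fun x : ℝ => f (x + y * Complex.I)) p volume ≤ C

/-- Hardy class `H_p` of the lower half-plane. -/
def HardyMinus (p : ℝ≥0∞) (f : ℂ → ℂ) : Prop :=
  DifferentiableOn ℂ f {z : ℂ | z.im < 0} ∧
    ∃ C : ℝ≥0∞, ∀ y : ℝ, y < 0 →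
      eLpNorm (fun x : ℝ => f (x + y * Complex.I)) p volume ≤ C

/-- A function on `ℝ` is a boundary value of an `H∞⁺` function. -/
def BdryHInfPlus (d : ℝ → ℂ) : Prop := ∃ F : ℂ → ℂ, HInfPlus F ∧ ∀ x : ℝ, F x = d x

/-- A function on `ℝ` is a boundary value of an `H∞⁻` function. -/
def BdryHInfMinus (d : ℝ → ℂ) : Prop := ∃ F : ℂ → ℂ, HInfMinus F ∧ ∀ x : ℝ, F x = d x

/-- `d` is of (strictly) positive type. -/
def PositiveType (d : ℝ → ℂ) : Prop :=
  (BdryHInfPlus d ∨ BdryHInfMinus fun x => (d x)⁻¹) ∧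
    ¬ (BdryHInfMinus d ∨ BdryHInfPlus fun x => (d x)⁻¹)


/-- The entire exponential `z ↦ e^{iμz}`. -/
def eFun (mu : ℝ) : ℂ → ℂ := fun z => Complex.exp (Complex.I * mu * z)

/-! On a horizontal strip of finite width every `e_μ` with `|μ| ≤ |λ|` is bounded above and
below by positive constants. Hence `|φ₂₊| = |a₊|^N`, and `φ₁₊` is, up to such a factor, a binary
form of degree `N - 1 ≥ 1` in `a₊, a₋` whose coefficients have moduli between two positive
constants. If `|a₊| + |a₋|` gets small, so does every monomial, hence `|φ₁₊| + |φ₂₊|`.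
Conversely, if `|a₊| + |a₋| ≥ c`, then either `|a₊|` is not small and `|φ₂₊|` is bounded below,
or `|a₊|` is small, `|a₋| ≥ c / 2`, and the monomial `a₋^{N-1}` of `φ₁₊` dominates all the
others, each of which carries a factor `a₊`. -/
open Finset

lemma norm_eFun (mu : ℝ) (z : ℂ) : ‖eFun mu z‖ = Real.exp (-(mu * z.im)) := by
  simp [eFun, Complex.norm_exp, Complex.mul_re]

section Strip

variable {B R mu : ℝ} {z : ℂ}

lemma norm_eFun_le (hmu : |mu| ≤ B) (hz : |z.im| ≤ R) : ‖eFun mu z‖ ≤ Real.exp (B * R) := by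
  rw [norm_eFun, Real.exp_le_exp]
  have := abs_mul mu z.im ▸ mul_le_mul hmu hz (abs_nonneg _) ((abs_nonneg mu).trans hmu)
  linarith [neg_abs_le (mu * z.im)]

lemma exp_neg_le_norm_eFun (hmu : |mu| ≤ B) (hz : |z.im| ≤ R) :
    Real.exp (-(B * R)) ≤ ‖eFun mu z‖ := by
  rw [norm_eFun, Real.exp_le_exp]
  have := abs_mul mu z.im ▸ mul_le_mul hmu hz (abs_nonneg _) ((abs_nonneg mu).trans hmu)
  linarith [le_abs_self (mu * z.im)]

end Strip

lemma abs_im_le_max {ε1 ε2 : ℝ} {z : ℂ} (h1 : -ε2 < z.im) (h2 : z.im < ε1) :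
    |z.im| ≤ max ε1 ε2 :=
  abs_le.mpr ⟨by linarith [le_max_right ε1 ε2], by linarith [le_max_left ε1 ε2]⟩

lemma abs_neg_nat_mul_div_le {j N : ℕ} (hj : j ≤ N) (lam : ℝ) :
    |-((j : ℝ) * lam / N)| ≤ |lam| := by
  rw [abs_neg, abs_div, abs_mul, Nat.abs_cast, Nat.abs_cast]
  refine div_le_of_le_mul₀ (Nat.cast_nonneg _) (abs_nonneg _) ?_
  rw [mul_comm]
  exact mul_le_mul_of_nonneg_left (by exact_mod_cast hj) (abs_nonneg _)

section BinarySums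

variable {𝕜 : Type*} [NormedDivisionRing 𝕜] {n : ℕ} {x y : 𝕜} {w : ℕ → 𝕜} {E : ℝ}

lemma norm_sum_pow_mul_pow_mul_le (hw : ∀ j ≤ n, ‖w j‖ ≤ E) :
    ‖∑ j ∈ range (n + 1), x ^ (n - j) * y ^ j * w j‖ ≤ (n + 1) * E * (‖x‖ + ‖y‖) ^ n := by
  have hterm : ∀ j ∈ range (n + 1), ‖x ^ (n - j) * y ^ j * w j‖ ≤ (‖x‖ + ‖y‖) ^ n * E := by
    intro j hj
    have hjn : j ≤ n := Nat.lt_succ_iff.mp (mem_range.mp hj)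
    rw [norm_mul, norm_mul, norm_pow, norm_pow]
    have hs : ‖x‖ ^ (n - j) * ‖y‖ ^ j ≤ (‖x‖ + ‖y‖) ^ n := by
      rw [← Nat.sub_add_cancel hjn, pow_add, Nat.add_sub_cancel]
      gcongr <;> linarith [norm_nonneg x, norm_nonneg y]
    exact mul_le_mul hs (hw j hjn) (norm_nonneg _) (by positivity)
  calc _ ≤ ∑ _j ∈ range (n + 1), (‖x‖ + ‖y‖) ^ n * E := norm_sum_le_of_le _ hterm
    _ = _ := by rw [sum_const, card_range, nsmul_eq_mul]; push_cast; ring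

lemma sub_le_norm_sum_pow_mul_pow_mul (hxy : ‖x‖ ≤ ‖y‖) (hw : ∀ j ≤ n, ‖w j‖ ≤ E) :
    ‖y‖ ^ (n + 1) * ‖w (n + 1)‖ - (n + 1) * E * ‖x‖ * ‖y‖ ^ n ≤
      ‖∑ j ∈ range (n + 2), x ^ (n + 1 - j) * y ^ j * w j‖ := by
  have hterm : ∀ j ∈ range (n + 1), ‖x ^ (n + 1 - j) * y ^ j * w j‖ ≤ ‖x‖ * ‖y‖ ^ n * E := by
    intro j hj
    have hjn : j ≤ n := Nat.lt_succ_iff.mp (mem_range.mp hj)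
    rw [norm_mul, norm_mul, norm_pow, norm_pow]
    have hs : ‖x‖ ^ (n + 1 - j) * ‖y‖ ^ j ≤ ‖x‖ * ‖y‖ ^ n := by
      rw [Nat.sub_add_comm hjn, pow_succ, ← Nat.sub_add_cancel hjn, pow_add, Nat.add_sub_cancel]
      calc ‖x‖ ^ (n - j) * ‖x‖ * ‖y‖ ^ j ≤ ‖y‖ ^ (n - j) * ‖x‖ * ‖y‖ ^ j := by gcongr
        _ = _ := by ring
    exact mul_le_mul hs (hw j hjn) (norm_nonneg _) (by positivity)
  have hrest : ‖∑ j ∈ range (n + 1), x ^ (n + 1 - j) * y ^ j * w j‖ ≤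
      (n + 1) * E * ‖x‖ * ‖y‖ ^ n := by
    calc _ ≤ ∑ _j ∈ range (n + 1), ‖x‖ * ‖y‖ ^ n * E := norm_sum_le_of_le _ hterm
      _ = _ := by rw [sum_const, card_range, nsmul_eq_mul]; push_cast; ring
  have hlast :
      ‖x ^ (n + 1 - (n + 1)) * y ^ (n + 1) * w (n + 1)‖ = ‖y‖ ^ (n + 1) * ‖w (n + 1)‖ := by
    simp [norm_mul, norm_pow]
  rw [sum_range_succ, ← hlast]
  set S := ∑ j ∈ range (n + 1), x ^ (n + 1 - j) * y ^ j * w j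
  have := norm_sub_le (S + x ^ (n + 1 - (n + 1)) * y ^ (n + 1) * w (n + 1)) S
  rw [add_sub_cancel_left] at this
  linarith

end BinarySums

lemma exists_pos_le_of_le_mul_pow_add_pow {n : ℕ} {K c : ℝ} (hK : 0 ≤ K) (hc : 0 < c) :
    ∃ c' > 0, ∀ s : ℝ, 0 ≤ s → c ≤ K * s ^ (n + 1) + s ^ (n + 2) → c' ≤ s := by
  refine ⟨min 1 (c / (K + 1)), by positivity, fun s hs hcs => ?_⟩
  by_contra! hlt
  have hs1 : s ≤ 1 := (lt_min_iff.mp hlt).1.le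
  have hsK : s * (K + 1) < c := (lt_div_iff₀ (by positivity)).mp (lt_min_iff.mp hlt).2
  have h1 : s ^ (n + 1) ≤ s := pow_le_of_le_one hs hs1 n.succ_ne_zero
  have h2 : s ^ (n + 2) ≤ s := pow_le_of_le_one hs hs1 (n + 1).succ_ne_zero
  have := mul_le_mul_of_nonneg_left h1 hK
  linarith

lemma exists_pos_le_of_pow_le_of_dominant {n : ℕ} {A e E c : ℝ} (hA : 0 < A) (he : 0 < e)
    (hE : 0 < E) (hc : 0 < c) :
    ∃ c' > 0, ∀ p q Φ : ℝ, 0 ≤ p → c ≤ p + q → p ^ (n + 2) ≤ Φ →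
      (p ≤ q → A * (q ^ (n + 1) * e - (n + 1) * E * p * q ^ n) ≤ Φ) → c' ≤ Φ := by
  -- once `p < δ`, the perturbation `(n + 1) E p q ^ n` is at most half the dominant term
  set δ := min (c / 2) (c * e / (4 * (n + 1) * E))
  have hδ : 0 < δ := by positivity
  refine ⟨min (δ ^ (n + 2)) (A * ((c / 2) ^ (n + 1) * e / 2)), by positivity,
    fun p q Φ hp hpq hΦp hΦq => ?_⟩
  rcases le_or_gt δ p with hδp | hpδ
  · exact (min_le_left _ _).trans ((pow_le_pow_left₀ hδ.le hδp _).trans hΦp)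
  have hδc : δ ≤ c / 2 := min_le_left _ _
  have hq : c / 2 ≤ q := by linarith
  have hq0 : 0 ≤ q := by linarith
  have hEp : (n + 1) * E * p ≤ q * e / 2 := by
    have : (n + 1) * E * δ ≤ c * e / 4 := by
      calc (n + 1) * E * δ ≤ (n + 1) * E * (c * e / (4 * (n + 1) * E)) := by
            gcongr; exact min_le_right _ _
        _ = c * e / 4 := by field_simp
    have := mul_le_mul_of_nonneg_left hpδ.le (by positivity : (0 : ℝ) ≤ (n + 1) * E)
    nlinarith
  have hdom : (c / 2) ^ (n + 1) * e / 2 ≤ q ^ (n + 1) * e - (n + 1) * E * p * q ^ n := by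
    have hqn : (c / 2) ^ (n + 1) ≤ q ^ (n + 1) := pow_le_pow_left₀ (by positivity) hq _
    have : (n + 1) * E * p * q ^ n ≤ q ^ (n + 1) * e / 2 := by
      calc (n + 1) * E * p * q ^ n ≤ q * e / 2 * q ^ n := by gcongr
        _ = q ^ (n + 1) * e / 2 := by ring
    nlinarith
  calc _ ≤ A * ((c / 2) ^ (n + 1) * e / 2) := min_le_right _ _
    _ ≤ A * (q ^ (n + 1) * e - (n + 1) * E * p * q ^ n) := by gcongr
    _ ≤ Φ := hΦq (by linarith)

def phiWeight (lam : ℝ) (N : ℕ) (z : ℂ) (j : ℕ) : ℂ := (-1) ^ j * eFun (-((j : ℝ) * lam / N)) z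

def phi1 (lam nu : ℝ) (N : ℕ) (ap am : ℂ → ℂ) (z : ℂ) : ℂ :=
  eFun (lam - nu) z * ∑ j ∈ range N,
    (-1 : ℂ) ^ j * ap z ^ (N - 1 - j) * am z ^ j * eFun (-((j : ℝ) * lam / N)) z

section Phi

variable {lam nu R : ℝ} {N n : ℕ} {ap am : ℂ → ℂ} {z : ℂ}

lemma norm_phiWeight_le (hz : |z.im| ≤ R) {j : ℕ} (hj : j ≤ N) :
    ‖phiWeight lam N z j‖ ≤ Real.exp (|lam| * R) := by
  simpa [phiWeight] using norm_eFun_le (abs_neg_nat_mul_div_le hj lam) hz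

lemma exp_neg_le_norm_phiWeight (hz : |z.im| ≤ R) {j : ℕ} (hj : j ≤ N) :
    Real.exp (-(|lam| * R)) ≤ ‖phiWeight lam N z j‖ := by
  simpa [phiWeight] using exp_neg_le_norm_eFun (abs_neg_nat_mul_div_le hj lam) hz

lemma phi1_eq_sum_phiWeight : phi1 lam nu (n + 2) ap am z = eFun (lam - nu) z *
    ∑ j ∈ range (n + 2), ap z ^ (n + 1 - j) * am z ^ j * phiWeight lam (n + 2) z j := by
  rw [phi1]
  congr 1
  exact sum_congr rfl fun j _ => by rw [phiWeight, show n + 2 - 1 = n + 1 from rfl]; ring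

lemma norm_phi1_add_pow_le (hz : |z.im| ≤ R) :
    ‖phi1 lam nu (n + 2) ap am z‖ + ‖ap z‖ ^ (n + 2) ≤
      Real.exp (|lam - nu| * R) * ((n + 2) * Real.exp (|lam| * R)) *
        (‖ap z‖ + ‖am z‖) ^ (n + 1) + (‖ap z‖ + ‖am z‖) ^ (n + 2) := by
  have hsum := norm_sum_pow_mul_pow_mul_le (n := n + 1) (x := ap z) (y := am z)
    (w := phiWeight lam (n + 2) z) fun j hj => norm_phiWeight_le hz (by omega)
  have hpow : ‖ap z‖ ^ (n + 2) ≤ (‖ap z‖ + ‖am z‖) ^ (n + 2) := by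
    gcongr
    exact le_add_of_nonneg_right (norm_nonneg _)
  rw [phi1_eq_sum_phiWeight, norm_mul]
  push_cast at hsum
  have := mul_le_mul (norm_eFun_le (mu := lam - nu) le_rfl hz) hsum (norm_nonneg _)
    (Real.exp_pos _).le
  linarith

lemma dominant_le_norm_phi1 (hz : |z.im| ≤ R) (hpq : ‖ap z‖ ≤ ‖am z‖) :
    Real.exp (-(|lam - nu| * R)) * (‖am z‖ ^ (n + 1) * Real.exp (-(|lam| * R)) -
      (n + 1) * Real.exp (|lam| * R) * ‖ap z‖ * ‖am z‖ ^ n) ≤ ‖phi1 lam nu (n + 2) ap am z‖ := by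
  have hsum := sub_le_norm_sum_pow_mul_pow_mul (n := n) (w := phiWeight lam (n + 2) z) hpq
    fun j hj => norm_phiWeight_le hz (by omega)
  have hlast : ‖am z‖ ^ (n + 1) * Real.exp (-(|lam| * R)) ≤
      ‖am z‖ ^ (n + 1) * ‖phiWeight lam (n + 2) z (n + 1)‖ := by
    gcongr
    exact exp_neg_le_norm_phiWeight hz (by omega)
  rw [phi1_eq_sum_phiWeight, norm_mul]
  calc _ ≤ Real.exp (-(|lam - nu| * R)) *
        ‖∑ j ∈ range (n + 2), ap z ^ (n + 1 - j) * am z ^ j * phiWeight lam (n + 2) z j‖ := by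
        gcongr
        linarith
    _ ≤ _ := by
        gcongr
        exact exp_neg_le_norm_eFun le_rfl hz

end Phi

theorem stmt12_general (lam nu : ℝ) (N : ℕ) (hN : 1 < N)
    (ap am : ℂ → ℂ)
    (φ1p φ2p : ℂ → ℂ)
    (hφ1p : ∀ z, φ1p z = eFun (lam - nu) z *
      ∑ j ∈ Finset.range N,
        (-1 : ℂ) ^ j * ap z ^ (N - 1 - j) * am z ^ j * eFun (-((j : ℝ) * lam / N)) z)
    (hφ2p : ∀ z, φ2p z = -(ap z ^ N))
    (ε1 ε2 : ℝ) :
    (∃ c : ℝ, 0 < c ∧ ∀ z : ℂ, -ε2 < z.im → z.im < ε1 →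
        c ≤ ‖φ1p z‖ + ‖φ2p z‖) ↔
    (∃ c : ℝ, 0 < c ∧ ∀ z : ℂ, -ε2 < z.im → z.im < ε1 →
        c ≤ ‖ap z‖ + ‖am z‖) := by
  obtain ⟨n, rfl⟩ : ∃ n, N = n + 2 := ⟨N - 2, by omega⟩
  obtain rfl : φ1p = phi1 lam nu (n + 2) ap am := funext hφ1p
  have hφ2 : ∀ z, ‖φ2p z‖ = ‖ap z‖ ^ (n + 2) := fun z => by rw [hφ2p, norm_neg, norm_pow]
  simp only [hφ2]
  set R := max ε1 ε2
  constructor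
  · rintro ⟨c, hc, H⟩
    obtain ⟨c', hc', hle⟩ := exists_pos_le_of_le_mul_pow_add_pow (n := n) (hc := hc)
      (K := Real.exp (|lam - nu| * R) * ((n + 2) * Real.exp (|lam| * R))) (by positivity)
    exact ⟨c', hc', fun z h1 h2 => hle _ (by positivity)
      ((H z h1 h2).trans (norm_phi1_add_pow_le (abs_im_le_max h1 h2)))⟩
  · rintro ⟨c, hc, H⟩
    obtain ⟨c', hc', hle⟩ := exists_pos_le_of_pow_le_of_dominant (n := n)
      (Real.exp_pos (-(|lam - nu| * R))) (Real.exp_pos (-(|lam| * R)))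
      (Real.exp_pos (|lam| * R)) hc
    exact ⟨c', hc', fun z h1 h2 => hle _ _ _ (norm_nonneg _) (H z h1 h2)
      (le_add_of_nonneg_left (norm_nonneg _))
      fun hpq => (dominant_le_norm_phi1 (abs_im_le_max h1 h2) hpq).trans
        (le_add_of_nonneg_right (by positivity))⟩

/-- Lemma 4.4: in any horizontal strip `S = {-ε₂ < Im ξ < ε₁}`, the infimum of
`|φ₁₊| + |φ₂₊|` is positive iff the infimum of `|a₊| + |a₋|` is. -/
theorem stmt12 (lam nu beta : ℝ) (N : ℕ) (hN : 1 < N) (hlam : 0 < lam)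
    (hnu : 0 ≤ nu) (hbeta : 0 ≤ beta) (hsum : nu + beta = lam / N)
    (ap am : ℂ → ℂ) (hap : HInfPlus ap) (ham : HInfMinus am)
    (hbp : HInfPlus fun z => eFun (beta / ((N : ℝ) - 1)) z * am z)
    (hbm : HInfMinus fun z => eFun (-(nu / ((N : ℝ) - 1))) z * ap z)
    (φ1p φ2p : ℂ → ℂ)
    (hφ1p : ∀ z, φ1p z = eFun (lam - nu) z *
      ∑ j ∈ Finset.range N,
        (-1 : ℂ) ^ j * ap z ^ (N - 1 - j) * am z ^ j * eFun (-((j : ℝ) * lam / N)) z)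
    (hφ2p : ∀ z, φ2p z = -(ap z ^ N))
    (ε1 ε2 : ℝ) (hε1 : 0 ≤ ε1) (hε2 : 0 ≤ ε2) :
    (∃ c : ℝ, 0 < c ∧ ∀ z : ℂ, -ε2 < z.im → z.im < ε1 →
        c ≤ ‖φ1p z‖ + ‖φ2p z‖) ↔
    (∃ c : ℝ, 0 < c ∧ ∀ z : ℂ, -ε2 < z.im → z.im < ε1 →
        c ≤ ‖ap z‖ + ‖am z‖) :=
  stmt12_general lam nu N hN ap am φ1p φ2p hφ1p hφ2p ε1 ε2
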